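/- arXiv:2512.22851 — 8 statements merged into one kernel-verified Lean document; each statement's English description precedes it below -/
import Mathlib

section
/- A finite FLew-algebra A is semi-primal if and only if for every subset P ⊆ A the characteristic function χ_P : A → A (with χ_P(a) = 1 if a ∈ P and χ_P(a) = 0 otherwise) is term-definable in A. -/
attribute [local instance] Classical.propDecidable

/-- An FLew-algebra: a bounded lattice with a commutative monoid structure whose unit is the
top element, together with a residuated implication. -/
class FLewAlg (A : Type*) extends Lattice A, BoundedOrder A, CommMonoid A where
  himp : A → A → A
  one_eq_top : (1 : A) = ⊤
  residuation : ∀ x y z : A, x * y ≤ z ↔ x ≤ himp y z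

/-- Terms in the signature of FLew-algebras (∧, ∨, ⊙, →, 0, 1) with `n` variables. -/
inductive FLewTerm : ℕ → Type
  | var {n : ℕ} : Fin n → FLewTerm n
  | zero {n : ℕ} : FLewTerm n
  | one {n : ℕ} : FLewTerm n
  | inf {n : ℕ} : FLewTerm n → FLewTerm n → FLewTerm n
  | sup {n : ℕ} : FLewTerm n → FLewTerm n → FLewTerm n
  | mul {n : ℕ} : FLewTerm n → FLewTerm n → FLewTerm n
  | imp {n : ℕ} : FLewTerm n → FLewTerm n → FLewTerm n

/-- Evaluation of a term in an FLew-algebra under a valuation of the variables. -/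
def FLewTerm.eval {A : Type*} [FLewAlg A] : ∀ {n : ℕ}, FLewTerm n → (Fin n → A) → A
  | _, .var i, v => v i
  | _, .zero, _ => ⊥
  | _, .one, _ => 1
  | _, .inf t₁ t₂, v => t₁.eval v ⊓ t₂.eval v
  | _, .sup t₁ t₂, v => t₁.eval v ⊔ t₂.eval v
  | _, .mul t₁ t₂, v => t₁.eval v * t₂.eval v
  | _, .imp t₁ t₂, v => FLewAlg.himp (t₁.eval v) (t₂.eval v)

/-- A subset of an FLew-algebra is a subalgebra if it contains the constants and is closed
under the operations. -/
def IsFLewSubalg {A : Type*} [FLewAlg A] (S : Set A) : Prop :=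
  ⊥ ∈ S ∧ (1 : A) ∈ S ∧
    ∀ a ∈ S, ∀ b ∈ S, a ⊓ b ∈ S ∧ a ⊔ b ∈ S ∧ a * b ∈ S ∧ FLewAlg.himp a b ∈ S

/-- A function `Aⁿ → A` is term-definable if it is the evaluation of some term. -/
def TermDefinable {A : Type*} [FLewAlg A] {n : ℕ} (f : (Fin n → A) → A) : Prop :=
  ∃ t : FLewTerm n, ∀ v : Fin n → A, t.eval v = f v

/-- A function preserves subalgebras if it maps tuples from a subalgebra into it. -/
def PreservesSubalgs {A : Type*} [FLewAlg A] {n : ℕ} (f : (Fin n → A) → A) : Prop :=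
  ∀ S : Set A, IsFLewSubalg S → ∀ v : Fin n → A, (∀ i, v i ∈ S) → f v ∈ S

/-- A finite algebra is semi-primal if every subalgebra-preserving function is term-definable. -/
def SemiPrimal (A : Type*) [FLewAlg A] : Prop :=
  ∀ (n : ℕ) (f : (Fin n → A) → A), PreservesSubalgs f → TermDefinable f

section Aux

variable {A : Type*} [FLewAlg A]

lemma FLew_bot_mul (x : A) : (⊥ : A) * x = ⊥ :=
  le_antisymm ((FLewAlg.residuation ⊥ x ⊥).mpr bot_le) bot_le

/-- Substitute the single variable of a unary term by a term in `n` variables. -/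
def FLewTerm.subst1 {n : ℕ} (s : FLewTerm n) : FLewTerm 1 → FLewTerm n
  | .var _ => s
  | .zero => .zero
  | .one => .one
  | .inf t₁ t₂ => .inf (subst1 s t₁) (subst1 s t₂)
  | .sup t₁ t₂ => .sup (subst1 s t₁) (subst1 s t₂)
  | .mul t₁ t₂ => .mul (subst1 s t₁) (subst1 s t₂)
  | .imp t₁ t₂ => .imp (subst1 s t₁) (subst1 s t₂)

lemma FLewTerm.eval_subst1 {n : ℕ} (s : FLewTerm n) (t : FLewTerm 1) (v : Fin n → A) :
    (FLewTerm.subst1 s t).eval v = t.eval (fun _ => s.eval v) := by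
  induction t <;> simp [FLewTerm.subst1, FLewTerm.eval, *]

def FLewTerm.prodT {n : ℕ} : List (FLewTerm n) → FLewTerm n
  | [] => .one
  | t :: l => .mul t (prodT l)

def FLewTerm.supT {n : ℕ} : List (FLewTerm n) → FLewTerm n
  | [] => .zero
  | t :: l => .sup t (supT l)

lemma FLewTerm.eval_prodT {n : ℕ} (l : List (FLewTerm n)) (v : Fin n → A) :
    (FLewTerm.prodT l).eval v = (l.map (·.eval v)).foldr (· * ·) 1 := by
  induction l <;> simp [FLewTerm.prodT, FLewTerm.eval, *]

lemma FLewTerm.eval_supT {n : ℕ} (l : List (FLewTerm n)) (v : Fin n → A) :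
    (FLewTerm.supT l).eval v = (l.map (·.eval v)).foldr (· ⊔ ·) ⊥ := by
  induction l <;> simp [FLewTerm.supT, FLewTerm.eval, *]

lemma foldr_mul_all_one {l : List A} (h : ∀ y ∈ l, y = 1) : l.foldr (· * ·) 1 = 1 := by
  induction l with
  | nil => rfl
  | cons a l ih =>
      simp only [List.foldr]
      rw [h a (by simp), ih fun y hy => h y (by simp [hy]), one_mul]

lemma foldr_mul_bot {l : List A} (h : (⊥ : A) ∈ l) : l.foldr (· * ·) 1 = ⊥ := by
  induction l with
  | nil => cases h
  | cons a l ih =>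
      simp only [List.foldr]
      rcases List.mem_cons.mp h with rfl | h'
      · exact FLew_bot_mul _
      · rw [ih h', mul_comm, FLew_bot_mul]

lemma foldr_sup_le {x : A} {l : List A} (h : ∀ y ∈ l, y ≤ x) : l.foldr (· ⊔ ·) ⊥ ≤ x := by
  induction l with
  | nil => exact bot_le
  | cons a l ih =>
      exact sup_le (h a (by simp)) (ih fun y hy => h y (by simp [hy]))

lemma le_foldr_sup {x : A} {l : List A} (hx : x ∈ l) : x ≤ l.foldr (· ⊔ ·) ⊥ := by
  induction l with
  | nil => cases hx
  | cons a l ih =>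
      rcases List.mem_cons.mp hx with rfl | h
      · exact le_sup_left
      · exact (ih h).trans le_sup_right

lemma foldr_sup_eq {x : A} {l : List A} (hx : x ∈ l) (h : ∀ y ∈ l, y ≤ x) :
    l.foldr (· ⊔ ·) ⊥ = x :=
  le_antisymm (foldr_sup_le h) (le_foldr_sup hx)

lemma isFLewSubalg_range {n : ℕ} (a : Fin n → A) :
    IsFLewSubalg (Set.range fun t : FLewTerm n => t.eval a) := by
  refine ⟨⟨.zero, by simp [FLewTerm.eval]⟩, ⟨.one, by simp [FLewTerm.eval]⟩, ?_⟩
  rintro _ ⟨t₁, rfl⟩ _ ⟨t₂, rfl⟩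
  exact ⟨⟨.inf t₁ t₂, by simp [FLewTerm.eval]⟩, ⟨.sup t₁ t₂, by simp [FLewTerm.eval]⟩, ⟨.mul t₁ t₂, by simp [FLewTerm.eval]⟩, ⟨.imp t₁ t₂, by simp [FLewTerm.eval]⟩⟩

end Aux

/-- A finite FLew-algebra is semi-primal iff for every subset `P ⊆ A` the characteristic
function `χ_P` (with value 1 on `P` and 0 off `P`) is term-definable. -/
theorem semiPrimal_iff_char (A : Type*) [FLewAlg A] [Fintype A] :
    SemiPrimal A ↔
      ∀ P : Set A,
        TermDefinable (fun v : Fin 1 → A => if v 0 ∈ P then (1 : A) else ⊥) := by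
  constructor
  · intro h P
    apply h 1
    intro S hS v hv
    dsimp only
    split
    · exact hS.2.1
    · exact hS.1
  · intro hchar n f hf
    -- characteristic terms of singletons
    choose χ hχ using fun c : A => hchar {c}
    -- for each tuple a, a term agreeing with f at a
    have hmem : ∀ a : Fin n → A, ∃ t : FLewTerm n, t.eval a = f a := by
      intro a
      exact hf _ (isFLewSubalg_range a) a fun i => ⟨.var i, by simp [FLewTerm.eval]⟩
    choose g hg using hmem
    -- delta terms
    set δ : (Fin n → A) → FLewTerm n :=
      fun a => FLewTerm.prodT ((List.finRange n).map fun i =>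
        FLewTerm.subst1 (.var i) (χ (a i))) with hδ
    have hδeval : ∀ a v : Fin n → A, (δ a).eval v = if v = a then 1 else ⊥ := by
      intro a v
      rw [hδ]
      simp only
      rw [FLewTerm.eval_prodT, List.map_map]
      have hlist : ((List.finRange n).map
          ((fun t : FLewTerm n => t.eval v) ∘ fun i =>
            FLewTerm.subst1 (.var i) (χ (a i))))
          = (List.finRange n).map (fun i => if v i = a i then (1 : A) else ⊥) := by
        apply List.map_congr_left
        intro i _
        simp only [Function.comp]
        rw [FLewTerm.eval_subst1, hχ]
        simp [FLewTerm.eval]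
      rw [hlist]
      by_cases hva : v = a
      · subst hva
        rw [if_pos rfl]
        apply foldr_mul_all_one
        intro y hy
        rcases List.mem_map.mp hy with ⟨i, _, rfl⟩
        simp
      · rw [if_neg hva]
        apply foldr_mul_bot
        have : ∃ i, v i ≠ a i := by
          by_contra hc
          push_neg at hc
          exact hva (funext hc)
        rcases this with ⟨i, hi⟩
        exact List.mem_map.mpr ⟨i, List.mem_finRange i, by simp [hi]⟩
    refine ⟨FLewTerm.supT ((Finset.univ : Finset (Fin n → A)).toList.map
      fun a => .mul (δ a) (g a)), ?_⟩
    intro v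
    rw [FLewTerm.eval_supT, List.map_map]
    have hentry : ∀ a : Fin n → A,
        ((fun t : FLewTerm n => t.eval v) ∘ fun a => FLewTerm.mul (δ a) (g a)) a
          = if v = a then f v else ⊥ := by
      intro a
      simp only [Function.comp, FLewTerm.eval]
      rw [hδeval]
      by_cases hva : v = a
      · subst hva
        rw [if_pos rfl, if_pos rfl, one_mul, hg]
      · rw [if_neg hva, if_neg hva, FLew_bot_mul]
    apply foldr_sup_eq
    · refine List.mem_map.mpr ⟨v, Finset.mem_toList.mpr (Finset.mem_univ v), ?_⟩
      rw [hentry v, if_pos rfl]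
    · intro y hy
      rcases List.mem_map.mp hy with ⟨a, _, rfl⟩
      rw [hentry a]
      split
      · exact le_rfl
      · exact bot_le
end

section
/- Let A be a linear complete FLew-algebra, and for each r ∈ A define λ^r_X : P(X) → P(A^X) by λ^r_X(S) = { ρ ∈ A^X | ⋁_{s∈S} ρ(s) ≥ r }. Then the collection {λ^r | r ∈ A \ {0}} is separating: if ρ₁ ≠ ρ₂ in A^X there exist r ∈ A \ {0} and S ⊆ X with ρ₁ ∈ λ^r_X(S) but ρ₂ ∉ λ^r_X(S), or vice versa. -/
/-- A complete FLew-algebra. -/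
class CompleteFLewAlg (A : Type*) extends CompleteLattice A, CommMonoid A where
  himp : A → A → A
  one_eq_top : (1 : A) = ⊤
  residuation : ∀ x y z : A, x * y ≤ z ↔ x ≤ himp y z

/-- The two-valued predicate lifting `λ^r` for the `A`-powerset functor:
`λ^r_X(S) = { ρ ∈ A^X | ⋁_{s∈S} ρ(s) ≥ r }`. -/
def lamR {A : Type*} [CompleteFLewAlg A] {X : Type*} (r : A) (S : Set X) : Set (X → A) :=
  {ρ : X → A | r ≤ ⨆ s ∈ S, ρ s}

lemma lamR_sep_aux {A : Type*} [CompleteFLewAlg A] {X : Type*} {ρ₁ ρ₂ : X → A} {x : X}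
    (hlt : ρ₂ x < ρ₁ x) :
    ∃ (r : A) (S : Set X), r ≠ ⊥ ∧ Xor' (ρ₁ ∈ lamR r S) (ρ₂ ∈ lamR r S) := by
  refine ⟨ρ₁ x, {x}, ?_, Or.inl ⟨?_, ?_⟩⟩
  · exact fun hb => absurd hlt (by simp [hb])
  · simp [lamR]
  · simp only [lamR, Set.mem_setOf_eq, iSup_singleton, Set.mem_singleton_iff, iSup_iSup_eq_left]
    exact fun hle => absurd (lt_of_lt_of_le hlt hle) (lt_irrefl _)

/-- For a linear complete FLew-algebra, the collection `{λ^r | r ∈ A \ {0}}` is separating: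
distinct `ρ₁ ≠ ρ₂` are distinguished by some `r ≠ 0` and some `S ⊆ X` (one belongs to
`λ^r(S)` and the other does not). -/
theorem lamR_separating (A : Type*) [CompleteFLewAlg A]
    (hlin : ∀ a b : A, a ≤ b ∨ b ≤ a)
    {X : Type*} (ρ₁ ρ₂ : X → A) (h : ρ₁ ≠ ρ₂) :
    ∃ (r : A) (S : Set X), r ≠ ⊥ ∧ Xor' (ρ₁ ∈ lamR r S) (ρ₂ ∈ lamR r S) := by
  obtain ⟨x, hx⟩ := Function.ne_iff.mp h
  rcases hlin (ρ₁ x) (ρ₂ x) with h1 | h1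
  · obtain ⟨r, S, hr, hxor⟩ := lamR_sep_aux (lt_of_le_of_ne h1 hx)
    exact ⟨r, S, hr, hxor.symm⟩
  · exact lamR_sep_aux (lt_of_le_of_ne h1 (Ne.symm hx))
end

section
/- Let (F, η, μ) be a monad on Set equipped with a natural transformation ⊔ : P ∘ F ⇒ F making each (FX, ⊔) a complete sup-semilattice. Define γ^[0] = η_X, γ^[n+1] = γ ; γ^[n] (Kleisli composition), and γ* = ⊔_{n∈ω} γ^[n]. Then Kleisli iteration is safe: if f : X → Y is a coalgebra morphism γ → γ̃, then f is a coalgebra morphism γ* → γ̃*. -/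
universe u

section

variable (F : Type u → Type u) (Fmap : ∀ {X Y : Type u}, (X → Y) → F X → F Y)
variable (η : ∀ X : Type u, X → F X) (μ : ∀ X : Type u, F (F X) → F X)
variable (sup : ∀ X : Type u, Set (F X) → F X)

/-- Kleisli composition of coalgebras: `γ₁ ; γ₂ = μ_X ∘ Fγ₂ ∘ γ₁`. -/
def kleisliComp {X : Type u} (γ₁ γ₂ : X → F X) : X → F X :=
  fun x => μ X (Fmap γ₂ (γ₁ x))

/-- Finite Kleisli iterates: `γ^[0] = η_X`, `γ^[n+1] = γ ; γ^[n]`. -/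
def kleisliIter {X : Type u} (γ : X → F X) : ℕ → X → F X
  | 0 => η X
  | n + 1 => kleisliComp F Fmap μ γ (kleisliIter γ n)

/-- Kleisli iteration: `γ* = ⊔_{n∈ω} γ^[n]` (pointwise). -/
def kleisliStar {X : Type u} (γ : X → F X) : X → F X :=
  fun x => sup X (Set.range fun n => kleisliIter F Fmap η μ γ n x)

/-- Kleisli iteration is safe: a coalgebra morphism `γ → γ̃` is also a coalgebra
morphism `γ* → γ̃*`. -/
theorem kleisliStar_safe
    (Fid : ∀ X : Type u, Fmap (id : X → X) = id)
    (Fcomp : ∀ {X Y Z : Type u} (f : X → Y) (g : Y → Z),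
      Fmap (g ∘ f) = Fmap g ∘ Fmap f)
    (ηnat : ∀ {X Y : Type u} (f : X → Y), Fmap f ∘ η X = η Y ∘ f)
    (μnat : ∀ {X Y : Type u} (f : X → Y), Fmap f ∘ μ X = μ Y ∘ Fmap (Fmap f))
    (μ_η : ∀ X : Type u, μ X ∘ η (F X) = id)
    (μ_Fη : ∀ X : Type u, μ X ∘ Fmap (η X) = id)
    (μ_assoc : ∀ X : Type u, μ X ∘ Fmap (μ X) = μ X ∘ μ (F X))
    -- `⊔` is a natural transformation `P ∘ F ⇒ F`
    (supnat : ∀ {X Y : Type u} (f : X → Y) (S : Set (F X)),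
      Fmap f (sup X S) = sup Y (Fmap f '' S))
    -- each `(F X, ⊔)` is a complete sup-semilattice for an order `le`
    (le : ∀ X : Type u, F X → F X → Prop)
    (sup_ub : ∀ (X : Type u) (S : Set (F X)), ∀ t ∈ S, le X t (sup X S))
    (sup_least : ∀ (X : Type u) (S : Set (F X)) (u : F X),
      (∀ t ∈ S, le X t u) → le X (sup X S) u)
    {X Y : Type u} (γ : X → F X) (γ' : Y → F Y) (f : X → Y)
    (hf : Fmap f ∘ γ = γ' ∘ f) :
    Fmap f ∘ kleisliStar F Fmap η μ sup γ = kleisliStar F Fmap η μ sup γ' ∘ f := by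
  have hiter : ∀ n x, Fmap f (kleisliIter F Fmap η μ γ n x)
      = kleisliIter F Fmap η μ γ' n (f x) := by
    intro n
    induction n with
    | zero => intro x; exact congrFun (ηnat f) x
    | succ n ih =>
      intro x
      show Fmap f (μ X (Fmap (kleisliIter F Fmap η μ γ n) (γ x))) = _
      have h1 := congrFun (μnat f) (Fmap (kleisliIter F Fmap η μ γ n) (γ x))
      simp only [Function.comp_apply] at h1
      have h2 : (Fmap f ∘ kleisliIter F Fmap η μ γ n)
          = kleisliIter F Fmap η μ γ' n ∘ f := funext fun x => ih x
      have h3 : Fmap (Fmap f) (Fmap (kleisliIter F Fmap η μ γ n) (γ x))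
          = Fmap (kleisliIter F Fmap η μ γ' n) (Fmap f (γ x)) := by
        have := congrFun (Fcomp (kleisliIter F Fmap η μ γ n) (Fmap f)) (γ x)
        simp only [Function.comp_apply] at this
        rw [← this, h2, Fcomp f (kleisliIter F Fmap η μ γ' n)]; rfl
      have hfx : Fmap f (γ x) = γ' (f x) := congrFun hf x
      rw [h1, h3, hfx]
      rfl
  funext x
  show Fmap f (sup X _) = sup Y _
  rw [supnat]
  congr 1
  ext t
  simp only [Set.mem_image, Set.mem_range]
  constructor
  · rintro ⟨_, ⟨n, rfl⟩, rfl⟩; exact ⟨n, (hiter n x).symm⟩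
  · rintro ⟨n, rfl⟩; exact ⟨_, ⟨n, rfl⟩, hiter n x⟩

end
end

section
/- For a monad (F, η, μ) on Set, the family M_X = Fμ_X ∘ FFμ_X : FFFFX → FFX is a natural transformation FFFF ⇒ FF, and the composition γ₁ ; γ₂ := M_X ∘ FFγ₂ ∘ γ₁ of FF-coalgebras is safe: joint FF-coalgebra morphisms are preserved. -/
universe u

/-- For a monad `(F, η, μ)` on Set, the family `M_X = Fμ_X ∘ FFμ_X : FFFFX → FFX` is a
natural transformation `FFFF ⇒ FF`, and the induced composition
`γ₁ ; γ₂ = M_X ∘ FFγ₂ ∘ γ₁` of `FF`-coalgebras is safe (preserves joint `FF`-coalgebra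
morphisms). -/
theorem doubleMonad_comp_natural_and_safe
    (F : Type u → Type u) (Fmap : ∀ {X Y : Type u}, (X → Y) → F X → F Y)
    (Fid : ∀ X : Type u, Fmap (id : X → X) = id)
    (Fcomp : ∀ {X Y Z : Type u} (f : X → Y) (g : Y → Z),
      Fmap (g ∘ f) = Fmap g ∘ Fmap f)
    (η : ∀ X : Type u, X → F X) (μ : ∀ X : Type u, F (F X) → F X)
    (ηnat : ∀ {X Y : Type u} (f : X → Y), Fmap f ∘ η X = η Y ∘ f)
    (μnat : ∀ {X Y : Type u} (f : X → Y), Fmap f ∘ μ X = μ Y ∘ Fmap (Fmap f))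
    (μ_η : ∀ X : Type u, μ X ∘ η (F X) = id)
    (μ_Fη : ∀ X : Type u, μ X ∘ Fmap (η X) = id)
    (μ_assoc : ∀ X : Type u, μ X ∘ Fmap (μ X) = μ X ∘ μ (F X)) :
    -- `M` is natural: `FFf ∘ M_X = M_Y ∘ FFFFf`
    (∀ (X Y : Type u) (f : X → Y) (t : F (F (F (F X)))),
        Fmap (Fmap f) (Fmap (μ X) (Fmap (Fmap (μ X)) t)) =
          Fmap (μ Y) (Fmap (Fmap (μ Y)) (Fmap (Fmap (Fmap (Fmap f))) t))) ∧
    -- the composition of `FF`-coalgebras is safe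
    (∀ (X Y : Type u) (γ₁ γ₂ : X → F (F X)) (γ₁' γ₂' : Y → F (F Y)) (f : X → Y),
        Fmap (Fmap f) ∘ γ₁ = γ₁' ∘ f → Fmap (Fmap f) ∘ γ₂ = γ₂' ∘ f →
        Fmap (Fmap f) ∘
            (fun x => Fmap (μ X) (Fmap (Fmap (μ X)) (Fmap (Fmap γ₂) (γ₁ x)))) =
          (fun y => Fmap (μ Y) (Fmap (Fmap (μ Y)) (Fmap (Fmap γ₂') (γ₁' y)))) ∘ f) := by
  have comp : ∀ {X Y Z : Type u} (f : X → Y) (g : Y → Z) (t : F X),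
      Fmap g (Fmap f t) = Fmap (g ∘ f) t := fun f g t => (congrFun (Fcomp f g) t).symm
  have key : ∀ (X Y : Type u) (f : X → Y),
      (Fmap f ∘ μ X) ∘ Fmap (μ X) = μ Y ∘ Fmap (μ Y) ∘ Fmap (Fmap (Fmap f)) := by
    intro X Y f
    rw [μnat f, Function.comp_assoc, ← Fcomp, μnat f, Fcomp, ← Function.comp_assoc]
  have Mnat : ∀ (X Y : Type u) (f : X → Y) (t : F (F (F (F X)))),
      Fmap (Fmap f) (Fmap (μ X) (Fmap (Fmap (μ X)) t)) =
        Fmap (μ Y) (Fmap (Fmap (μ Y)) (Fmap (Fmap (Fmap (Fmap f))) t)) := by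
    intro X Y f t
    calc Fmap (Fmap f) (Fmap (μ X) (Fmap (Fmap (μ X)) t))
        = Fmap ((Fmap f ∘ μ X) ∘ Fmap (μ X)) t := by rw [comp, comp]
      _ = Fmap (μ Y ∘ Fmap (μ Y) ∘ Fmap (Fmap (Fmap f))) t := by rw [key X Y f]
      _ = Fmap ((μ Y ∘ Fmap (μ Y)) ∘ Fmap (Fmap (Fmap f))) t := rfl
      _ = Fmap (μ Y) (Fmap (Fmap (μ Y)) (Fmap (Fmap (Fmap (Fmap f))) t)) := by
          rw [comp, comp]
  refine ⟨Mnat, ?_⟩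
  intro X Y γ₁ γ₂ γ₁' γ₂' f h₁ h₂
  funext x
  have e1 : Fmap (Fmap f) (γ₁ x) = γ₁' (f x) := congrFun h₁ x
  have e2 : Fmap (Fmap (Fmap (Fmap f))) (Fmap (Fmap γ₂) (γ₁ x)) =
      Fmap (Fmap γ₂') (γ₁' (f x)) := by
    rw [comp, ← Fcomp, h₂, Fcomp, ← comp, e1]
  simp only [Function.comp_apply]
  rw [Mnat X Y f, e2]
end

section
/- Let A be a complete FLew-algebra with 0 ≠ 1, F = P_A the A-powerset functor, and define test(σ)(x) = e_x ⊙^pw σ where e_x(x)=1 and e_x(x')=0 for x'≠x. Then for the predicate lifting λ^□_X(σ)(ρ) = ⋀_{x'∈X} (ρ(x') → σ(x')), one has λ^□_X(φ)(test(ψ)(x)) = ψ(x) → φ(x) for all φ, ψ ∈ A^X and x ∈ X; i.e., test is reducible with respect to λ^□ via the term t(x₀,x₁) = x₀ → x₁. -/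
attribute [local instance] Classical.propDecidable

/-- The "unit vector" `e_x` with `e_x(x) = 1` and `e_x(x') = 0` for `x' ≠ x`. -/
noncomputable def eUnit {A : Type*} [CompleteFLewAlg A] {X : Type*} (x : X) : X → A :=
  fun x' => if x' = x then 1 else ⊥

/-- The test for the `A`-powerset functor: `test(σ)(x) = e_x ⊙^pw σ`. -/
noncomputable def testPA {A : Type*} [CompleteFLewAlg A] {X : Type*} (σ : X → A) : X → (X → A) :=
  fun x x' => eUnit x x' * σ x'

/-- The box predicate lifting on `A`-labelled frames:
`λ^□_X(σ)(ρ) = ⋀_{x'∈X} (ρ(x') → σ(x'))`. -/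
def lamBoxPA {A : Type*} [CompleteFLewAlg A] {X : Type*} (σ ρ : X → A) : A :=
  ⨅ x', CompleteFLewAlg.himp (ρ x') (σ x')

/-- Reduction of the test with respect to `λ^□`:
`λ^□_X(φ)(test(ψ)(x)) = ψ(x) → φ(x)`, i.e. the test is reducible via `t(x₀,x₁) = x₀ → x₁`. -/
theorem testPA_reducible_box (A : Type*) [CompleteFLewAlg A] (h01 : (⊥ : A) ≠ 1)
    {X : Type*} (φ ψ : X → A) (x : X) :
    lamBoxPA φ (testPA ψ x) = CompleteFLewAlg.himp (ψ x) (φ x) := by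
  have hbot : ∀ a : A, (⊥ : A) * a = ⊥ := fun a =>
    le_antisymm ((CompleteFLewAlg.residuation ⊥ a ⊥).2 bot_le) bot_le
  have himp_bot : ∀ z : A, CompleteFLewAlg.himp (⊥ : A) z = ⊤ := fun z =>
    le_antisymm le_top ((CompleteFLewAlg.residuation ⊤ ⊥ z).1
      (by rw [mul_comm, hbot]; exact bot_le))
  apply le_antisymm
  · exact iInf_le_of_le x (by simp [testPA, eUnit, one_mul])
  · apply le_iInf
    intro x'
    by_cases h : x' = x
    · subst h; simp [testPA, eUnit, one_mul]
    · simp [testPA, eUnit, h, hbot, himp_bot]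
end

section
/- Let A be a finite linear FLew-algebra and γ₁, γ₂ : X → A^X be P_A-coalgebras with Kleisli composition (γ₁ ; γ₂)(x)(z) = ⋁_{y∈X} γ₁(x)(y) ⊙ γ₂(y)(z). Then for every r ∈ A and S ⊆ X: ⋁_{z∈S} (γ₁;γ₂)(x)(z) ≥ r if and only if there exist r₁, r₂ ∈ A with r₁ ⊙ r₂ ≥ r, and y ∈ X with γ₁(x)(y) ≥ r₁ and ⋁_{z∈S} γ₂(y)(z) ≥ r₂. -/
/-!
Since `A` is a finite chain, a join is attained: `r ≤ ⋁ᵢ fᵢ` with `r ≠ ⊥` forces `r ≤ fᵢ` for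
some `i`. Applied to the outer join over `z ∈ S` and the inner join over `y`, this gives the
witnesses `r₁ = γ₁(x)(y)` and `r₂ = γ₂(y)(z)`. Conversely, residuation makes `a ⊙ ·` a left
adjoint, so it is monotone and commutes with joins, and
`r ≤ r₁ ⊙ r₂ ≤ γ₁(x)(y) ⊙ ⋁_{z∈S} γ₂(y)(z) = ⋁_{z∈S} γ₁(x)(y) ⊙ γ₂(y)(z)`.
-/

section Chain

variable {α : Type*} [CompleteLattice α]

theorem supClosed_of_total (hlin : ∀ a b : α, a ≤ b ∨ b ≤ a) (s : Set α) : SupClosed s := by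
  intro a ha b hb
  rcases hlin a b with h | h
  · rwa [sup_eq_right.mpr h]
  · rwa [sup_eq_left.mpr h]

theorem exists_le_of_le_iSup_of_total [Finite α] (hlin : ∀ a b : α, a ≤ b ∨ b ≤ a)
    {ι : Sort*} {f : ι → α} {r : α} (hr : r ≤ ⨆ i, f i) (hr₀ : r ≠ ⊥) : ∃ i, r ≤ f i := by
  rcases isEmpty_or_nonempty ι with hι | hι
  · exact absurd (le_bot_iff.mp (hr.trans_eq (iSup_of_empty f))) hr₀
  · obtain ⟨i, hi⟩ : ⨆ i, f i ∈ Set.range f := by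
      rw [← sSup_range]
      exact (supClosed_of_total hlin _).sSup_mem_of_nonempty (Set.toFinite _)
        (Set.range_nonempty f) le_rfl
    exact ⟨i, hr.trans_eq hi.symm⟩

end Chain

namespace CompleteFLewAlg

variable {A : Type*} [CompleteFLewAlg A]

theorem gc_mul_left (a : A) : GaloisConnection (a * ·) (himp a) := fun x z => by
  simpa only [mul_comm x a] using residuation x a z

instance : IsOrderedMonoid A where
  mul_le_mul_left _ _ h c := by
    simpa only [mul_comm _ c] using (gc_mul_left c).monotone_l h

theorem mul_iSup₂ {ι : Sort*} {κ : ι → Sort*} (a : A) (f : (i : ι) → κ i → A) :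
    a * ⨆ (i) (j), f i j = ⨆ (i) (j), a * f i j :=
  (gc_mul_left a).l_iSup₂

end CompleteFLewAlg

/-- For a finite linear FLew-algebra `A` and `P_A`-coalgebras `γ₁, γ₂` with Kleisli
composition `(γ₁;γ₂)(x)(z) = ⋁_y γ₁(x)(y) ⊙ γ₂(y)(z)`:
`⋁_{z∈S} (γ₁;γ₂)(x)(z) ≥ r` iff there are `r₁, r₂` with `r₁ ⊙ r₂ ≥ r` and some `y` with
`γ₁(x)(y) ≥ r₁` and `⋁_{z∈S} γ₂(y)(z) ≥ r₂`. -/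
theorem kleisli_lamR_reduction (A : Type*) [CompleteFLewAlg A] [Fintype A]
    (hlin : ∀ a b : A, a ≤ b ∨ b ≤ a)
    {X : Type*} (γ₁ γ₂ : X → X → A) (r : A) (S : Set X) (x : X) :
    (r ≤ ⨆ z ∈ S, ⨆ y, γ₁ x y * γ₂ y z) ↔
      ∃ r₁ r₂ : A, r ≤ r₁ * r₂ ∧
        ∃ y : X, r₁ ≤ γ₁ x y ∧ r₂ ≤ ⨆ z ∈ S, γ₂ y z := by
  constructor
  · intro h
    rcases eq_or_ne r ⊥ with rfl | hr₀
    · exact ⟨⊥, ⊥, bot_le, x, bot_le, bot_le⟩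
    obtain ⟨z, hz⟩ := exists_le_of_le_iSup_of_total hlin h hr₀
    obtain ⟨hzS, hz⟩ := exists_le_of_le_iSup_of_total hlin hz hr₀
    obtain ⟨y, hy⟩ := exists_le_of_le_iSup_of_total hlin hz hr₀
    exact ⟨γ₁ x y, γ₂ y z, hy, y, le_rfl, le_biSup (γ₂ y) hzS⟩
  · rintro ⟨r₁, r₂, hr, y, h₁, h₂⟩
    calc r ≤ γ₁ x y * ⨆ z ∈ S, γ₂ y z := hr.trans (mul_le_mul' h₁ h₂)
      _ = ⨆ z ∈ S, γ₁ x y * γ₂ y z := CompleteFLewAlg.mul_iSup₂ _ _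
      _ ≤ ⨆ z ∈ S, ⨆ y', γ₁ x y' * γ₂ y' z :=
        iSup₂_mono fun z _ => le_iSup (fun y' => γ₁ x y' * γ₂ y' z) y
end

section
/- For any linear complete FLew-algebra A, the A-powerset functor P_A weakly preserves inverse limits of surjective ω-cochains of finite sets: given a coherent sequence (σ_m), σ_m ∈ A^{X_m}, with σ_m(x) = ⋁{ σ_{m+1}(x') | p_m(x') = x }, the map σ ∈ A^{lim X_m} defined by σ((x_m)) = ⋀_m σ_m(x_m) satisfies ⋁{ σ(x⃗) | π_m(x⃗) = x } = σ_m(x) for every m and x ∈ X_m. -/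
/-- The inverse limit of an ω-cochain of sets: coherent sequences. -/
def InvLim (X : ℕ → Type*) (p : ∀ m, X (m + 1) → X m) : Type _ :=
  {x : ∀ m, X m // ∀ m, p m (x (m + 1)) = x m}

/-- The candidate `A`-predicate on the inverse limit: `σ((x_m)) = ⋀_m σ_m(x_m)`. -/
def sigmaLim {A : Type*} [CompleteFLewAlg A] {X : ℕ → Type*}
    {p : ∀ m, X (m + 1) → X m} (σ : ∀ m, X m → A) (l : InvLim X p) : A :=
  ⨅ m, σ m (l.1 m)

/-- In a linear complete lattice, a finite nonempty sup is attained. -/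
lemma finset_sup_attain {A : Type*} [CompleteLattice A]
    (hlin : ∀ a b : A, a ≤ b ∨ b ≤ a) {ι : Type*} [DecidableEq ι]
    (s : Finset ι) (hs : s.Nonempty) (f : ι → A) : ∃ i ∈ s, s.sup f ≤ f i := by
  induction s using Finset.induction_on with
  | empty => exact absurd hs (by simp)
  | @insert a s ha ih =>
    rcases s.eq_empty_or_nonempty with rfl | hsne
    · exact ⟨a, by simp, by simp⟩
    · obtain ⟨i, hi, hle⟩ := ih hsne
      rcases hlin (f a) (f i) with h | h
      · exact ⟨i, Finset.mem_insert_of_mem hi,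
          by rw [Finset.sup_insert]; exact sup_le h hle⟩
      · exact ⟨a, Finset.mem_insert_self a s,
          by rw [Finset.sup_insert]; exact sup_le le_rfl (hle.trans h)⟩

/-- For a linear complete FLew-algebra, the `A`-powerset functor weakly preserves inverse
limits of surjective ω-cochains of finite sets: given a coherent sequence
`σ_m(x) = ⋁ { σ_{m+1}(x') | p_m(x') = x }`, the map `sigmaLim σ` induces the sequence:
`⋁ { sigmaLim σ (x⃗) | π_m(x⃗) = x } = σ_m(x)`. -/
theorem PA_weakly_preserves (A : Type*) [CompleteFLewAlg A]
    (hlin : ∀ a b : A, a ≤ b ∨ b ≤ a)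
    (X : ℕ → Type*) [∀ m, Fintype (X m)]
    (p : ∀ m, X (m + 1) → X m) (hp : ∀ m, Function.Surjective (p m))
    (σ : ∀ m, X m → A)
    (hcoh : ∀ m (x : X m),
      σ m x = ⨆ x' : {x' : X (m + 1) // p m x' = x}, σ (m + 1) x'.1) :
    ∀ (m : ℕ) (x : X m),
      (⨆ l : {l : InvLim X p // l.1 m = x}, sigmaLim (p := p) σ l.1) = σ m x := by
  classical
  -- attainment step: any point has a preimage with at least the same value
  have attain : ∀ (n : ℕ) (z : X n), ∃ z' : X (n + 1), p n z' = z ∧ σ n z ≤ σ (n + 1) z' := by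
    intro n z
    have hne : Nonempty {x' : X (n + 1) // p n x' = z} :=
      let ⟨w, hw⟩ := hp n z; ⟨⟨w, hw⟩⟩
    obtain ⟨i, _, hle⟩ := finset_sup_attain hlin (Finset.univ)
      Finset.univ_nonempty (fun x' : {x' : X (n + 1) // p n x' = z} => σ (n + 1) x'.1)
    refine ⟨i.1, i.2, ?_⟩
    rw [hcoh n z]
    exact le_trans (iSup_le fun j => Finset.le_sup
      (f := fun x' : {x' : X (n + 1) // p n x' = z} => σ (n + 1) x'.1) (Finset.mem_univ j)) hle
  choose st hst1 hst2 using attain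
  intro m x
  -- the ascending sequence through x
  let y0 : ∀ k, X (m + k) := fun k => Nat.rec x (fun k yk => st (m + k) yk) k
  have hy0p : ∀ k, p (m + k) (y0 (k + 1)) = y0 k := fun k => hst1 (m + k) (y0 k)
  have hy0σ : ∀ k, σ m x ≤ σ (m + k) (y0 k) := by
    intro k; induction k with
    | zero => exact le_rfl
    | succ k ih => exact le_trans ih (hst2 (m + k) (y0 k))
  -- all levels are nonempty
  have hne : ∀ n, Nonempty (X n) := by
    have hdown : ∀ j, Nonempty (X (m - j)) := by
      intro j; induction j with
      | zero => exact ⟨x⟩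
      | succ j ih =>
        by_cases hj : j < m
        · have h1 : m - j = (m - (j + 1)) + 1 := by omega
          obtain ⟨z⟩ := ih
          rw [h1] at z
          exact ⟨p _ z⟩
        · have h1 : m - (j + 1) = m - j := by omega
          rw [h1]; exact ih
    intro n
    rcases le_or_gt m n with h | h
    · have h2 : Nonempty (X (m + (n - m))) := ⟨y0 (n - m)⟩
      rwa [Nat.add_sub_cancel' h] at h2
    · have h2 := hdown (m - n)
      rwa [Nat.sub_sub_self h.le] at h2
  -- a total function agreeing with y0 above m
  let l0 : ∀ n, X n := fun n =>
    if h : m ≤ n then cast (congrArg X (by omega : m + (n - m) = n)) (y0 (n - m))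
    else Classical.choice (hne n)
  have hl0 : ∀ k, l0 (m + k) = y0 k := by
    intro k
    have h : m ≤ m + k := Nat.le_add_right m k
    simp only [l0, dif_pos h]
    exact eq_of_heq ((cast_heq _ _).trans (congr_arg_heq y0 (by omega : m + k - m = k)))
  have hl0m : l0 m = x := hl0 0
  have hl0p : ∀ n, m ≤ n → p n (l0 (n + 1)) = l0 n := by
    intro n hn
    obtain ⟨k, rfl⟩ := Nat.exists_eq_add_of_le hn
    rw [hl0 k, show l0 (m + k + 1) = y0 (k + 1) from hl0 (k + 1)]
    exact hy0p k
  have hl0σ : ∀ n, m ≤ n → σ m x ≤ σ n (l0 n) := by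
    intro n hn
    obtain ⟨k, rfl⟩ := Nat.exists_eq_add_of_le hn
    rw [hl0 k]; exact hy0σ k
  -- extend coherence downwards, one level at a time
  have Q : ∀ i, ∃ y : ∀ n, X n, y m = x ∧ (∀ n, m - i ≤ n → p n (y (n + 1)) = y n) ∧
      (∀ n, m - i ≤ n → σ m x ≤ σ n (y n)) := by
    intro i; induction i with
    | zero => exact ⟨l0, hl0m, hl0p, hl0σ⟩
    | succ i ih =>
      obtain ⟨y, hym, hyp, hyσ⟩ := ih
      by_cases hi : m - i = 0
      · exact ⟨y, hym, fun n hn => hyp n (by omega), fun n hn => hyσ n (by omega)⟩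
      · set j := m - (i + 1) with hjdef
        have hj1 : j + 1 = m - i := by omega
        have hjm : j ≠ m := by omega
        set y' : ∀ n, X n := Function.update y j (p j (y (j + 1))) with hy'def
        have hy'j : y' j = p j (y (j + 1)) := Function.update_self j _ y
        have hy'ne : ∀ n, n ≠ j → y' n = y n := fun n hn => Function.update_of_ne hn _ y
        refine ⟨y', ?_, ?_, ?_⟩
        · rw [hy'ne m (Ne.symm hjm)]; exact hym
        · intro n hn
          rcases eq_or_lt_of_le hn with heq | hlt
          · rw [← heq, hy'ne (j + 1) (by omega), hy'j]
          · rw [hy'ne (n + 1) (by omega), hy'ne n (by omega)]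
            exact hyp n (by omega)
        · intro n hn
          rcases eq_or_lt_of_le hn with heq | hlt
          · rw [← heq, hy'j, hcoh j (p j (y (j + 1)))]
            exact le_trans (hyσ (j + 1) (by omega))
              (le_iSup (fun w : {w : X (j + 1) // p j w = p j (y (j + 1))} => σ (j + 1) w.1)
                ⟨y (j + 1), rfl⟩)
          · rw [hy'ne n (by omega)]
            exact hyσ n (by omega)
  obtain ⟨l, hlm, hlp, hlσ⟩ := Q m
  have hcl : ∀ n, p n (l (n + 1)) = l n := fun n => hlp n (by omega)
  apply le_antisymm
  · refine iSup_le fun w => ?_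
    exact le_trans (iInf_le (fun n => σ n (w.1.1 n)) m) (le_of_eq (congrArg (σ m) w.2))
  · have h1 : σ m x ≤ sigmaLim (p := p) σ ⟨l, hcl⟩ := le_iInf fun n => hlσ n (by omega)
    exact le_trans h1
      (le_iSup (fun w : {l : InvLim X p // l.1 m = x} => sigmaLim (p := p) σ w.1) ⟨⟨l, hcl⟩, hlm⟩)
end

section
/- Let γ₁, γ₂ : X → PPX be coalgebras for the double powerset functor, with instantial composition (γ₁;γ₂)(x) = { ⋃F | ∃ Z ∈ γ₁(x), F ⊆ ⋃_{z∈Z} γ₂(z), and ∀ z ∈ Z, γ₂(z) ∩ F ≠ ∅ }. Then for all S₁,…,S_k, S ⊆ X and x ∈ X: (∃ W ∈ (γ₁;γ₂)(x) with W ⊆ S and W ∩ Sᵢ ≠ ∅ for all i) if and only if (∃ Z ∈ γ₁(x) such that for all z ∈ Z there is U ∈ γ₂(z) with U ⊆ S, and for each i there exist z ∈ Z and U ∈ γ₂(z) with U ⊆ S and U ∩ Sᵢ ≠ ∅). -/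
/-- Instantial sequential composition of double-powerset coalgebras:
`(γ₁;γ₂)(x) = { ⋃F | ∃ Z ∈ γ₁(x), F ⊆ ⋃_{z∈Z} γ₂(z), ∀ z ∈ Z, γ₂(z) ∩ F ≠ ∅ }`. -/
def instComp {X : Type*} (γ₁ γ₂ : X → Set (Set X)) (x : X) : Set (Set X) :=
  {W | ∃ Z ∈ γ₁ x, ∃ F : Set (Set X),
    F ⊆ (⋃ z ∈ Z, γ₂ z) ∧ (∀ z ∈ Z, (γ₂ z ∩ F).Nonempty) ∧ W = ⋃₀ F}

/-- The reduction law for sequential composition in Instantial PDL. -/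
theorem instComp_reduction {X : Type*} (γ₁ γ₂ : X → Set (Set X))
    (k : ℕ) (S : Set X) (Si : Fin k → Set X) (x : X) :
    (∃ W ∈ instComp γ₁ γ₂ x, W ⊆ S ∧ ∀ i, (W ∩ Si i).Nonempty) ↔
      (∃ Z ∈ γ₁ x, (∀ z ∈ Z, ∃ U ∈ γ₂ z, U ⊆ S) ∧
        ∀ i, ∃ z ∈ Z, ∃ U ∈ γ₂ z, U ⊆ S ∧ (U ∩ Si i).Nonempty) := by
  constructor
  · rintro ⟨W, ⟨Z, hZ, F, hF, hmeet, rfl⟩, hWS, hi⟩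
    refine ⟨Z, hZ, ?_, ?_⟩
    · intro z hz
      obtain ⟨U, hU, hUF⟩ := hmeet z hz
      exact ⟨U, hU, fun a ha => hWS ⟨U, hUF, ha⟩⟩
    · intro i
      obtain ⟨a, haW, haSi⟩ := hi i
      obtain ⟨U, hUF, haU⟩ := haW
      obtain ⟨z, hz, hUz⟩ := by simpa using hF hUF
      exact ⟨z, hz, U, hUz, fun b hb => hWS ⟨U, hUF, hb⟩, ⟨a, haU, haSi⟩⟩
  · rintro ⟨Z, hZ, hall, hi⟩
    refine ⟨⋃₀ {U | U ⊆ S ∧ ∃ z ∈ Z, U ∈ γ₂ z},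
      ⟨Z, hZ, _, ?_, ?_, rfl⟩, ?_, ?_⟩
    · rintro U ⟨hUS, z, hz, hUz⟩
      exact Set.mem_biUnion hz hUz
    · intro z hz
      obtain ⟨U, hUz, hUS⟩ := hall z hz
      exact ⟨U, hUz, hUS, z, hz, hUz⟩
    · rintro a ⟨U, ⟨hUS, -⟩, ha⟩
      exact hUS ha
    · intro i
      obtain ⟨z, hz, U, hUz, hUS, a, haU, haSi⟩ := hi i
      exact ⟨a, ⟨U, ⟨hUS, z, hz, hUz⟩, haU⟩, haSi⟩
end
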